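/- If p_{σ,n} ∈ P_n^σ, then for |z| = r < 1: Re p_{σ,n}(z) ≥ 1 + 2 Σ_{k=1}^∞ [(σ-(n-1))_n/(σ+k-(n-1))_n] (-r)^k. -/

import Mathlib

open Complex MeasureTheory

/-- The Carathéodory class `P`: analytic on the unit disk, value `1` at `0`,
positive real part. -/
def IsCara (p : ℂ → ℂ) : Prop :=
  DifferentiableOn ℂ p (Metric.ball 0 1) ∧ p 0 = 1 ∧
    ∀ z ∈ Metric.ball (0 : ℂ) 1, 0 < (p z).re

/-- The σ-nth integral iterate (averaged form after substituting `t = s z`):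
`p_{σ,n}(z) = (σ-(n-1)) ∫_0^1 s^(σ-n) p_{σ,n-1}(s z) ds`. -/
noncomputable def sigmaIter (σ : ℝ) : ℕ → (ℂ → ℂ) → (ℂ → ℂ)
  | 0, p => p
  | (n + 1), p => fun z =>
      ((σ - (n : ℝ)) : ℂ) *
        ∫ s in (0 : ℝ)..1, ((s ^ (σ - ((n : ℝ) + 1)) : ℝ) : ℂ) * sigmaIter σ n p ((s : ℂ) * z)

/-- The coefficient multiplier `[σ]_{n/k} = (σ-(n-1))_n / (σ+k-(n-1))_n`
(Pochhammer / rising factorial). -/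
noncomputable def poch (σ : ℝ) (n k : ℕ) : ℝ :=
  (ascPochhammer ℝ n).eval (σ - ((n : ℝ) - 1)) /
    (ascPochhammer ℝ n).eval (σ + (k : ℝ) - ((n : ℝ) - 1))

/-- Membership in `P_n^σ`. -/
def MemPn (σ : ℝ) (n : ℕ) (q : ℂ → ℂ) : Prop :=
  ∃ p : ℂ → ℂ, IsCara p ∧ ∀ z ∈ Metric.ball (0 : ℂ) 1, q z = sigmaIter σ n p z

/-- Membership in `B_n^σ(β)`: `f(z) = z (β + (1-β) p_{σ,n}(z))` for some Carathéodory `p`. -/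
def MemB (σ : ℝ) (n : ℕ) (β : ℝ) (f : ℂ → ℂ) : Prop :=
  ∃ p : ℂ → ℂ, IsCara p ∧ ∀ z ∈ Metric.ball (0 : ℂ) 1,
    f z = z * ((β : ℂ) + ((1 : ℂ) - β) * sigmaIter σ n p z)

/-!
For `n = 0` the bound is Harnack's inequality `Re p(z) ≥ (1 - r)/(1 + r) = 1 + 2 ∑ (-r)^k`,
obtained from the Schwarz lemma applied to the Cayley transform `(p - 1)/(p + 1)`.
Each integral iterate is a positive weighted average,
`Re p_{σ,m+1}(z) = (σ - m) ∫₀¹ s^(σ-m-1) Re p_{σ,m}(s z) ds`, so a lower bound for `p_{σ,m}`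
on the circle of radius `s r` integrates to one for `p_{σ,m+1}`. Integrating the series termwise
multiplies the `k`-th coefficient by `(σ - m)/(σ + k - m)`, which is how the ratio
`(σ-(n-1))_n / (σ+k-(n-1))_n` of rising factorials, i.e. of the falling factorials of `σ` and
`σ + k`, changes from `n = m` to `n = m + 1`.
-/

open Metric Set intervalIntegral
open scoped Interval Topology

lemma poch_eq_div_descPochhammer (σ : ℝ) (n k : ℕ) :
    poch σ n k = (descPochhammer ℝ n).eval σ / (descPochhammer ℝ n).eval (σ + k) := by
  simp only [poch, descPochhammer_eval_eq_ascPochhammer]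
  congr 2 <;> ring

lemma poch_zero (σ : ℝ) (k : ℕ) : poch σ 0 k = 1 := by
  simp [poch]

lemma poch_succ (σ : ℝ) (m k : ℕ) :
    poch σ (m + 1) k = (σ - m) / (σ + k - m) * poch σ m k := by
  simp only [poch_eq_div_descPochhammer, descPochhammer_succ_eval, mul_div_mul_comm, mul_comm]

section Pochhammer

variable {σ : ℝ} {n : ℕ}

lemma poch_pos (hσ : (n : ℝ) - 1 < σ) (k : ℕ) : 0 < poch σ n k := by
  have hk : (n : ℝ) - 1 < σ + k := by linarith [k.cast_nonneg (α := ℝ)]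
  rw [poch_eq_div_descPochhammer]
  exact div_pos (descPochhammer_pos hσ) (descPochhammer_pos hk)

lemma poch_le_one (hσ : (n : ℝ) - 1 < σ) (k : ℕ) : poch σ n k ≤ 1 := by
  have hk : (n : ℝ) - 1 < σ + k := by linarith [k.cast_nonneg (α := ℝ)]
  rw [poch_eq_div_descPochhammer, div_le_one (descPochhammer_pos hk)]
  exact monotoneOn_descPochhammer_eval n hσ.le hk.le (le_add_of_nonneg_right k.cast_nonneg)

end Pochhammer

noncomputable def pochSeries (σ : ℝ) (n : ℕ) (x : ℝ) : ℝ :=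
  ∑' k : ℕ, poch σ n (k + 1) * (-x) ^ (k + 1)

section PochSeries

variable {σ : ℝ} {n : ℕ}

lemma norm_poch_mul_pow_le (hσ : (n : ℝ) - 1 < σ) {x r : ℝ} (hx : |x| ≤ r) (k : ℕ) :
    ‖poch σ n (k + 1) * (-x) ^ (k + 1)‖ ≤ r ^ (k + 1) := by
  rw [norm_mul, norm_pow, norm_neg, Real.norm_eq_abs, Real.norm_eq_abs, abs_of_pos (poch_pos hσ _)]
  calc poch σ n (k + 1) * |x| ^ (k + 1) ≤ 1 * |x| ^ (k + 1) := by
        gcongr; exact poch_le_one hσ _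
    _ ≤ r ^ (k + 1) := by rw [one_mul]; gcongr

lemma summable_pow_succ {r : ℝ} (h0 : 0 ≤ r) (h1 : r < 1) : Summable fun k : ℕ => r ^ (k + 1) :=
  (summable_nat_add_iff 1).mpr (summable_geometric_of_lt_one h0 h1)

lemma summable_poch_mul_pow (hσ : (n : ℝ) - 1 < σ) {x : ℝ} (hx : |x| < 1) :
    Summable fun k : ℕ => poch σ n (k + 1) * (-x) ^ (k + 1) :=
  .of_norm_bounded (summable_pow_succ (abs_nonneg x) hx) (norm_poch_mul_pow_le hσ le_rfl)

lemma continuousOn_pochSeries (hσ : (n : ℝ) - 1 < σ) {r : ℝ} (h0 : 0 ≤ r) (h1 : r < 1) :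
    ContinuousOn (pochSeries σ n) (Icc (-r) r) :=
  continuousOn_tsum (fun _ => by fun_prop) (summable_pow_succ h0 h1)
    fun k _ hx => norm_poch_mul_pow_le hσ (abs_le.mpr hx) k

lemma continuousOn_pochSeries_mul (hσ : (n : ℝ) - 1 < σ) {r : ℝ} (h0 : 0 ≤ r)
    (h1 : r < 1) : ContinuousOn (fun s : ℝ => pochSeries σ n (s * r)) (Icc 0 1) :=
  (continuousOn_pochSeries hσ h0 h1).comp (by fun_prop) fun s hs =>
    ⟨by nlinarith [hs.1], by nlinarith [hs.2]⟩

lemma one_add_two_mul_pochSeries_zero {r : ℝ} (hr : |r| < 1) :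
    1 + 2 * pochSeries σ 0 r = (1 - r) / (1 + r) := by
  have hr' : ‖-r‖ < 1 := by rwa [norm_neg, Real.norm_eq_abs]
  have h1r : 1 + r ≠ 0 := by linarith [neg_abs_le r]
  simp_rw [pochSeries, poch_zero, one_mul, pow_succ', tsum_mul_left,
    tsum_geometric_of_norm_lt_one hr', sub_neg_eq_add]
  field_simp
  ring

end PochSeries

lemma Complex.le_re_of_norm_sub_one_le {w : ℂ} {r : ℝ} (h0 : 0 ≤ r) (h1 : r < 1)
    (h : ‖w - 1‖ ≤ r * ‖w + 1‖) : (1 - r) / (1 + r) ≤ w.re := by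
  have hsq : (w.re - 1) ^ 2 + w.im ^ 2 ≤ r ^ 2 * ((w.re + 1) ^ 2 + w.im ^ 2) := by
    have := pow_le_pow_left₀ (norm_nonneg _) h 2
    simpa [mul_pow, Complex.sq_norm, Complex.normSq_apply, ← sq] using this
  rw [div_le_iff₀ (by linarith)]
  by_contra! hlt
  -- `hsq` rearranges to `((1+r)u - (1-r)) ((1-r)u - (1+r)) + (1-r²) v² ≤ 0` for `u + iv = w`,
  -- while both factors of the product are negative when `(1+r)u < 1-r`.
  have hA : 0 < (1 - r) - w.re * (1 + r) := sub_pos.2 hlt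
  have hB : 0 < (1 + r) - (1 - r) * w.re := by
    nlinarith [mul_lt_mul_of_pos_left hlt (sub_pos.2 h1)]
  nlinarith [mul_pos hA hB, mul_nonneg (by nlinarith : (0:ℝ) ≤ 1 - r ^ 2) (sq_nonneg w.im)]

lemma Complex.norm_sub_one_le_norm_add_one {w : ℂ} (hw : 0 ≤ w.re) : ‖w - 1‖ ≤ ‖w + 1‖ := by
  rw [← sq_le_sq₀ (norm_nonneg _) (norm_nonneg _), Complex.sq_norm, Complex.sq_norm,
    Complex.normSq_apply, Complex.normSq_apply]
  simp only [Complex.sub_re, Complex.add_re, Complex.sub_im, Complex.add_im, Complex.one_re,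
    Complex.one_im]
  nlinarith

lemma IsCara.one_sub_div_one_add_le_re {p : ℂ → ℂ} (hp : IsCara p) {z : ℂ}
    (hz : z ∈ ball (0 : ℂ) 1) : (1 - ‖z‖) / (1 + ‖z‖) ≤ (p z).re := by
  obtain ⟨hd, h0, hre⟩ := hp
  have hne : ∀ w ∈ ball (0 : ℂ) 1, p w + 1 ≠ 0 := fun w hw h => by
    have := congrArg Complex.re h
    simp only [Complex.add_re, Complex.one_re, Complex.zero_re] at this
    linarith [hre w hw]
  have hmaps : MapsTo (fun w => (p w - 1) / (p w + 1)) (ball 0 1) (closedBall 0 1) := by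
    intro w hw
    rw [mem_closedBall_zero_iff, norm_div, div_le_one (norm_pos_iff.2 (hne w hw))]
    exact Complex.norm_sub_one_le_norm_add_one (hre w hw).le
  have hz1 := mem_ball_zero_iff.mp hz
  have hschwarz := Complex.norm_le_norm_of_mapsTo_ball ((hd.sub_const 1).div (hd.add_const 1) hne)
    hmaps (by simp [h0]) hz1
  rw [Pi.div_apply, norm_div, div_le_iff₀ (norm_pos_iff.2 (hne z hz))] at hschwarz
  exact Complex.le_re_of_norm_sub_one_le (norm_nonneg z) hz1 hschwarz

lemma integral_rpow_mul_pow_succ {e : ℝ} (he : -1 < e) (k : ℕ) :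
    ∫ s in (0 : ℝ)..1, s ^ e * s ^ (k + 1) = (e + k + 2)⁻¹ := by
  have hek : 0 < e + ↑(k + 1) := by push_cast; linarith [k.cast_nonneg (α := ℝ)]
  have hpow : ∀ s ∈ [[(0 : ℝ), 1]], s ^ e * s ^ (k + 1) = s ^ (e + ↑(k + 1)) := fun s hs => by
    rw [uIcc_of_le zero_le_one] at hs
    exact (Real.rpow_add_natCast' hs.1 hek.ne').symm
  rw [integral_congr hpow, integral_rpow (Or.inl (by linarith)), Real.one_rpow,
    Real.zero_rpow (by linarith)]
  push_cast
  ring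

lemma intervalIntegrable_rpow_mul {e : ℝ} (he : -1 < e) {g : ℝ → ℝ}
    (hg : ContinuousOn g (Icc 0 1)) : IntervalIntegrable (fun s => s ^ e * g s) volume 0 1 :=
  (intervalIntegrable_rpow' he).mul_continuousOn (uIcc_of_le (zero_le_one (α := ℝ)) ▸ hg)

lemma intervalIntegrable_ofReal_rpow_mul {e : ℝ} (he : -1 < e) {g : ℝ → ℂ}
    (hg : ContinuousOn g (Icc 0 1)) :
    IntervalIntegrable (fun s => ((s ^ e : ℝ) : ℂ) * g s) volume 0 1 := by
  convert (intervalIntegrable_rpow' he).smul_continuousOn (uIcc_of_le (zero_le_one (α := ℝ)) ▸ hg)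
    using 2
  exact Complex.real_smul.symm

lemma re_integral_ofReal_rpow_mul {e : ℝ} (he : -1 < e) {g : ℝ → ℂ}
    (hg : ContinuousOn g (Icc 0 1)) :
    (∫ s in (0 : ℝ)..1, ((s ^ e : ℝ) : ℂ) * g s).re = ∫ s in (0 : ℝ)..1, s ^ e * (g s).re := by
  simpa [Complex.re_ofReal_mul] using
    (intervalIntegral_re (intervalIntegrable_ofReal_rpow_mul he hg)).symm

lemma integral_rpow_mul_pochSeries {σ : ℝ} {m : ℕ} (hσ : (m : ℝ) < σ) {r : ℝ} (h0 : 0 ≤ r)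
    (h1 : r < 1) :
    (σ - m) * ∫ s in (0 : ℝ)..1, s ^ (σ - (m + 1)) * pochSeries σ m (s * r)
      = pochSeries σ (m + 1) r := by
  have hσ' : (m : ℝ) - 1 < σ := by linarith
  have he : -1 < σ - (m + 1) := by linarith
  have hIoc : Ι (0 : ℝ) 1 = Ioc 0 1 := uIoc_of_le zero_le_one
  have hsr : ∀ s ∈ Ioc (0 : ℝ) 1, |s * r| ≤ r := fun s hs => by
    rw [abs_of_nonneg (by nlinarith [hs.1])]; nlinarith [hs.2]
  have hsum : HasSum
      (fun k : ℕ =>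
        ∫ s in (0 : ℝ)..1, s ^ (σ - (m + 1)) * (poch σ m (k + 1) * (-(s * r)) ^ (k + 1)))
      (∫ s in (0 : ℝ)..1, s ^ (σ - (m + 1)) * pochSeries σ m (s * r)) := by
    refine hasSum_integral_of_dominated_convergence (fun k s => r ^ (k + 1) * s ^ (σ - (m + 1)))
      (fun k => by fun_prop) (fun k => ?_) ?_ ?_ ?_
    · filter_upwards with s hs
      rw [hIoc] at hs
      rw [norm_mul, Real.norm_of_nonneg (Real.rpow_nonneg hs.1.le _), mul_comm]
      exact mul_le_mul_of_nonneg_right (norm_poch_mul_pow_le hσ' (hsr s hs) k)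
        (Real.rpow_nonneg hs.1.le _)
    · exact .of_forall fun s _ => (summable_pow_succ h0 h1).mul_right _
    · simp_rw [tsum_mul_right]
      exact (intervalIntegrable_rpow' he).const_mul _
    · filter_upwards with s hs
      rw [hIoc] at hs
      exact (summable_poch_mul_pow hσ' ((hsr s hs).trans_lt h1)).hasSum.mul_left _
  rw [← hsum.tsum_eq, ← tsum_mul_left]
  refine tsum_congr fun k => ?_
  have hterm : ∀ s : ℝ, s ^ (σ - (m + 1)) * (poch σ m (k + 1) * (-(s * r)) ^ (k + 1))
      = poch σ m (k + 1) * (-r) ^ (k + 1) * (s ^ (σ - (m + 1)) * s ^ (k + 1)) := fun s => by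
    ring
  simp_rw [hterm, intervalIntegral.integral_const_mul, integral_rpow_mul_pow_succ he, poch_succ]
  push_cast
  ring

lemma integral_rpow_mul_one_add_two_mul_pochSeries {σ : ℝ} {m : ℕ} (hσ : (m : ℝ) < σ) {r : ℝ}
    (h0 : 0 ≤ r) (h1 : r < 1) :
    (σ - m) * ∫ s in (0 : ℝ)..1, s ^ (σ - (m + 1)) * (1 + 2 * pochSeries σ m (s * r))
      = 1 + 2 * pochSeries σ (m + 1) r := by
  have he : -1 < σ - (m + 1) := by linarith
  have hcont := continuousOn_pochSeries_mul (σ := σ) (n := m) (by linarith) h0 h1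
  simp_rw [mul_add, mul_one, mul_left_comm _ (2 : ℝ)]
  rw [integral_add (intervalIntegrable_rpow' he)
      ((intervalIntegrable_rpow_mul he hcont).const_mul 2), intervalIntegral.integral_const_mul,
    mul_add, mul_left_comm, integral_rpow_mul_pochSeries hσ h0 h1, integral_rpow (Or.inl he),
    Real.one_rpow, Real.zero_rpow (by linarith), show σ - (m + 1) + 1 = σ - m by ring, sub_zero,
    mul_one_div_cancel (by linarith)]

lemma ofReal_mul_mem_ball {s ρ : ℝ} (hs : s ∈ Icc (0 : ℝ) 1) {z : ℂ} (hz : z ∈ ball (0 : ℂ) ρ) :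
    (s : ℂ) * z ∈ ball (0 : ℂ) ρ := by
  rw [mem_ball_zero_iff] at hz ⊢
  rw [norm_mul, Complex.norm_real, Real.norm_of_nonneg hs.1]
  exact (mul_le_of_le_one_left (norm_nonneg z) hs.2).trans_lt hz

lemma continuousOn_ofReal_mul_comp {f : ℂ → ℂ} {ρ : ℝ} (hf : ContinuousOn f (ball 0 ρ)) {z : ℂ}
    (hz : z ∈ ball (0 : ℂ) ρ) : ContinuousOn (fun s : ℝ => f (s * z)) (Icc 0 1) :=
  hf.comp (by fun_prop) fun _ hs => ofReal_mul_mem_ball hs hz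

lemma continuousOn_integral_ofReal_rpow_mul {f : ℂ → ℂ} (hf : ContinuousOn f (ball 0 1)) {e : ℝ}
    (he : -1 < e) :
    ContinuousOn (fun z => ∫ s in (0 : ℝ)..1, ((s ^ e : ℝ) : ℂ) * f (s * z)) (ball 0 1) := by
  intro z₀ hz₀
  obtain ⟨ρ, hρz, hρ1⟩ := exists_between (mem_ball_zero_iff.mp hz₀)
  obtain ⟨C, hC⟩ := (isCompact_closedBall (0 : ℂ) ρ).exists_bound_of_continuousOn
    (hf.mono (closedBall_subset_ball hρ1))
  have hIoc : Ι (0 : ℝ) 1 = Ioc 0 1 := uIoc_of_le zero_le_one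
  have hnhds : ball (0 : ℂ) ρ ∈ 𝓝 z₀ := isOpen_ball.mem_nhds (mem_ball_zero_iff.mpr hρz)
  refine (continuousAt_of_dominated_interval (bound := fun s => C * s ^ e) ?_ ?_
    ((intervalIntegrable_rpow' he).const_mul C) ?_).continuousWithinAt
  · filter_upwards [hnhds] with z hz
    rw [hIoc]
    exact (intervalIntegrable_ofReal_rpow_mul he
      (continuousOn_ofReal_mul_comp (hf.mono (ball_subset_ball hρ1.le)) hz)).1.aestronglyMeasurable
  · filter_upwards [hnhds] with z hz
    filter_upwards with s hs
    rw [hIoc] at hs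
    rw [norm_mul, Complex.norm_real, Real.norm_of_nonneg (Real.rpow_nonneg hs.1.le e), mul_comm C]
    exact mul_le_mul_of_nonneg_left
      (hC _ (ball_subset_closedBall (ofReal_mul_mem_ball (Ioc_subset_Icc_self hs) hz)))
      (Real.rpow_nonneg hs.1.le e)
  · filter_upwards with s hs
    rw [hIoc] at hs
    exact continuousAt_const.mul ((hf.continuousAt (isOpen_ball.mem_nhds
      (ofReal_mul_mem_ball (Ioc_subset_Icc_self hs) hz₀))).comp (by fun_prop))

section SigmaIter

variable {σ : ℝ} {p : ℂ → ℂ}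

lemma continuousOn_sigmaIter (hp : ContinuousOn p (ball 0 1)) :
    ∀ {n : ℕ}, (n : ℝ) - 1 < σ → ContinuousOn (sigmaIter σ n p) (ball 0 1)
  | 0, _ => hp
  | m + 1, hσ => by
    push_cast at hσ
    exact continuousOn_const.mul (continuousOn_integral_ofReal_rpow_mul
      (continuousOn_sigmaIter hp (by linarith)) (by linarith))

lemma re_sigmaIter_succ (hp : ContinuousOn p (ball 0 1)) {m : ℕ} (hσ : (m : ℝ) < σ) {z : ℂ}
    (hz : z ∈ ball (0 : ℂ) 1) :
    (sigmaIter σ (m + 1) p z).re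
      = (σ - m) * ∫ s in (0 : ℝ)..1, s ^ (σ - (m + 1)) * (sigmaIter σ m p (s * z)).re := by
  rw [sigmaIter, ← Complex.ofReal_sub, Complex.re_ofReal_mul, re_integral_ofReal_rpow_mul
    (by linarith) (continuousOn_ofReal_mul_comp (continuousOn_sigmaIter hp (by linarith)) hz)]

lemma IsCara.one_add_two_mul_pochSeries_le_re_sigmaIter (hp : IsCara p) {n : ℕ}
    (hσ : (n : ℝ) - 1 < σ) {z : ℂ} (hz : z ∈ ball (0 : ℂ) 1) :
    1 + 2 * pochSeries σ n ‖z‖ ≤ (sigmaIter σ n p z).re := by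
  induction n generalizing z with
  | zero =>
    rw [one_add_two_mul_pochSeries_zero (by rw [abs_norm]; exact mem_ball_zero_iff.mp hz)]
    exact hp.one_sub_div_one_add_le_re hz
  | succ m ih =>
    push_cast at hσ
    have hm : (m : ℝ) < σ := by linarith
    have he : -1 < σ - (m + 1) := by linarith
    have hcont := continuousOn_ofReal_mul_comp
      (continuousOn_sigmaIter hp.1.continuousOn (σ := σ) (n := m) (by linarith)) hz
    rw [← integral_rpow_mul_one_add_two_mul_pochSeries hm (norm_nonneg z) (mem_ball_zero_iff.mp hz),
      re_sigmaIter_succ hp.1.continuousOn hm hz]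
    refine mul_le_mul_of_nonneg_left ?_ (sub_pos.2 hm).le
    refine integral_mono_on zero_le_one ?_ ?_ fun s hs => ?_
    · exact intervalIntegrable_rpow_mul he (continuousOn_const.add (continuousOn_const.mul
        (continuousOn_pochSeries_mul (by linarith) (norm_nonneg z) (mem_ball_zero_iff.mp hz))))
    · exact intervalIntegrable_rpow_mul he (Complex.continuous_re.comp_continuousOn hcont)
    · have hsz := ih (by linarith) (ofReal_mul_mem_ball hs hz)
      rw [norm_mul, Complex.norm_real, Real.norm_of_nonneg hs.1] at hsz
      exact mul_le_mul_of_nonneg_left hsz (Real.rpow_nonneg hs.1 _)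

end SigmaIter

/-- Lower real-part bound for members of `P_n^σ`:
`Re p_{σ,n}(z) ≥ 1 + 2 Σ_{k≥1} [σ]_{n/k} (-r)^k` for `|z| = r < 1`. -/
theorem stmt8 (σ : ℝ) (n : ℕ) (hσ : 0 < σ - ((n : ℝ) - 1))
    (q : ℂ → ℂ) (hq : MemPn σ n q)
    (z : ℂ) (r : ℝ) (hz : ‖z‖ = r) (hr : r < 1) :
    1 + 2 * ∑' k : ℕ, poch σ n (k + 1) * (-r) ^ (k + 1) ≤ (q z).re := by
  obtain ⟨p, hp, hpq⟩ := hq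
  have hzb : z ∈ ball (0 : ℂ) 1 := mem_ball_zero_iff.mpr (hz ▸ hr)
  rw [hpq z hzb, ← hz]
  exact hp.one_add_two_mul_pochSeries_le_re_sigmaIter (by linarith) hzb
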